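/- arXiv:1412.2478 — 3 statements merged into one kernel-verified Lean document; each statement's English description precedes it below -/
import Mathlib

section
/- Let K ⊂ ℝ^n be a nonempty compact set. For every z ∈ int conv K there exists z̄ ∈ ℝ^n such that the closed segment [z − z̄, z + z̄] is contained in int conv K and |z̄| ≥ (1/(2n)) · dist(z, K). -/
/-!
By Carathéodory, `z` is a convex combination of at most `n + 1` points of `K`, so one of them, `y`,
carries weight at least `1 / (n + 1)`. Moving `z` away from `y` by `(z - y) / n` then still gives a
convex combination of the same points. So `z ± (z - y) / (2n)` lie strictly between the interior
point `z` and points of `conv K`, hence in `int conv K`, and `z̄ := (z - y) / (2n)` works.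
-/

open Finset Module

variable {E : Type*} [AddCommGroup E] [Module ℝ E]

theorem add_smul_sub_mem_convexHull {ι : Type*} [Fintype ι] {s : Set E} {p : ι → E} {w : ι → ℝ}
    (hp : ∀ i, p i ∈ s) (hw₀ : ∀ i, 0 ≤ w i) (hw₁ : ∑ i, w i = 1) {i : ι} {r : ℝ} (hr : 0 ≤ r)
    (hri : r ≤ (1 + r) * w i) :
    ∑ j, w j • p j + r • (∑ j, w j • p j - p i) ∈ convexHull ℝ s := by
  classical
  set c : ι → ℝ := fun j => (1 + r) * w j - if j = i then r else 0
  have hc₀ : ∀ j ∈ univ, 0 ≤ c j := by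
    intro j _
    by_cases hj : j = i
    · subst hj; simp only [c, if_true]; linarith
    · simp only [c, hj, if_false, sub_zero]; exact mul_nonneg (by linarith) (hw₀ j)
  have hc₁ : ∑ j, c j = 1 := by
    simp only [c, sum_sub_distrib, ← mul_sum, hw₁, sum_ite_eq', mem_univ, if_true]; ring
  have hcp : ∑ j, c j • p j = ∑ j, w j • p j + r • (∑ j, w j • p j - p i) := by
    simp only [c, sub_smul, sum_sub_distrib, mul_smul, ← smul_sum, ite_smul, zero_smul,
      sum_ite_eq', mem_univ, if_true]
    module
  rw [← hcp]
  exact (convex_convexHull ℝ s).sum_mem hc₀ hc₁ fun j _ => subset_convexHull ℝ s (hp j)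

theorem exists_mem_add_inv_finrank_smul_sub_mem_convexHull [FiniteDimensional ℝ E] {s : Set E}
    {z : E} (hz : z ∈ convexHull ℝ s) :
    ∃ y ∈ s, z + (finrank ℝ E : ℝ)⁻¹ • (z - y) ∈ convexHull ℝ s := by
  obtain ⟨ι, _, p, w, hps, hind, hw₀, hw₁, rfl⟩ := eq_pos_convex_span_of_mem_convexHull hz
  have hcard : (Fintype.card ι : ℝ) ≤ finrank ℝ E + 1 := by
    exact_mod_cast hind.card_le_finrank_succ.trans (Nat.succ_le_succ (Submodule.finrank_le _))
  set d : ℝ := (finrank ℝ E : ℝ)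
  have hne : (univ : Finset ι).Nonempty := nonempty_of_sum_ne_zero (hw₁ ▸ one_ne_zero)
  obtain ⟨i, -, hi⟩ : ∃ i ∈ (univ : Finset ι), 1 / (d + 1) ≤ w i := by
    refine exists_le_of_sum_le hne ?_
    rw [hw₁, sum_const, nsmul_eq_mul, card_univ, mul_one_div, div_le_one (by positivity)]
    exact hcard
  refine ⟨p i, hps (Set.mem_range_self i), ?_⟩
  refine add_smul_sub_mem_convexHull (fun j => hps (Set.mem_range_self j)) (fun j => (hw₀ j).le)
    hw₁ (by positivity) ?_
  rw [div_le_iff₀ (by positivity)] at hi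
  rcases (show 0 ≤ d by positivity).eq_or_lt with hd | hd
  · rw [← hd, inv_zero, add_zero, one_mul]; exact (hw₀ i).le
  · calc d⁻¹ = d⁻¹ * 1 := (mul_one _).symm
      _ ≤ d⁻¹ * (w i * (d + 1)) := by gcongr
      _ = (1 + d⁻¹) * w i := by field_simp

theorem geometric_lemma_general {n : ℕ}
    (K : Set (EuclideanSpace ℝ (Fin n)))
    (z : EuclideanSpace ℝ (Fin n)) (hz : z ∈ interior (convexHull ℝ K)) :
    ∃ zbar : EuclideanSpace ℝ (Fin n),
      segment ℝ (z - zbar) (z + zbar) ⊆ interior (convexHull ℝ K) ∧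
      ‖zbar‖ ≥ (1 / (2 * (n : ℝ))) * Metric.infDist z K := by
  have hC := convex_convexHull ℝ K
  obtain ⟨y, hyK, hp⟩ := exists_mem_add_inv_finrank_smul_sub_mem_convexHull (interior_subset hz)
  rw [finrank_euclideanSpace_fin] at hp
  set c : ℝ := 1 / (2 * n)
  have hc_eq : c = 1 / 2 * (n : ℝ)⁻¹ := by ring
  have hc₀ : 0 ≤ c := by positivity
  have hc₁ : c < 1 := by linarith [Nat.cast_inv_le_one (α := ℝ) n]
  refine ⟨c • (z - y), hC.interior.segment_subset ?_ ?_, ?_⟩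
  · convert hC.combo_interior_self_mem_interior hz (subset_convexHull ℝ K hyK)
      (sub_pos.2 hc₁) hc₀ (sub_add_cancel 1 c) using 1
    module
  · convert hC.combo_interior_self_mem_interior hz hp (one_half_pos (α := ℝ)) one_half_pos.le
      (add_halves 1) using 1
    rw [hc_eq]
    module
  · rw [norm_smul, Real.norm_of_nonneg hc₀, ← dist_eq_norm]
    exact mul_le_mul_of_nonneg_left (Metric.infDist_le_dist_of_mem hyK) hc₀

/-- **Geometric lemma.** Let `K ⊆ ℝⁿ` be a nonempty compact set. For every
`z ∈ int conv K` there exists `z̄ ∈ ℝⁿ` such that the closed segment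
`[z − z̄, z + z̄]` is contained in `int conv K` and `|z̄| ≥ (1/(2n))·dist(z, K)`. -/
theorem geometric_lemma {n : ℕ}
    (K : Set (EuclideanSpace ℝ (Fin n))) (hK : IsCompact K) (hKne : K.Nonempty)
    (z : EuclideanSpace ℝ (Fin n)) (hz : z ∈ interior (convexHull ℝ K)) :
    ∃ zbar : EuclideanSpace ℝ (Fin n),
      segment ℝ (z - zbar) (z + zbar) ⊆ interior (convexHull ℝ K) ∧
      ‖zbar‖ ≥ (1 / (2 * (n : ℝ))) * Metric.infDist z K :=
  geometric_lemma_general K z hz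
end

section
/- Let K ⊂ ℝ^n be a nonempty compact set and let Λ ⊂ ℝ^n be a dense subset of ℝ^n. Then for every z ∈ int conv K there exists z̄ ∈ Λ such that the closed segment [z − z̄, z + z̄] is contained in int conv K and |z̄| ≥ (1/(4n)) · dist(z, K). -/
/-!
By Carathéodory, `z` is a convex combination of at most `n + 1` points of `K`, so some point
`x ∈ K` carries weight at least `1 / (n + 1)`; that weight is exactly what allows `z` to be pushed
away from `x` to `z - (x - z) / n` without leaving `conv K`. Halving, both ends of the segment
`[z - v, z + v]` with `v = (x - z) / (2n)` lie in `int conv K`, and `‖v‖ ≥ dist(z, K) / (2n)`.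
A direction from the dense set `Λ` close enough to `v` keeps the segment in the open convex set
`int conv K` and loses at most half of `‖v‖`.
-/

open Set Module Metric

section ConvexHull

variable {E : Type*} [AddCommGroup E] [Module ℝ E]

theorem sub_smul_sub_mem_convexHull_of_le_weight {ι : Type*} [Fintype ι] [DecidableEq ι]
    {K : Set E} {x : ι → E} (hxK : ∀ i, x i ∈ K) {w : ι → ℝ} (hw₀ : ∀ i, 0 ≤ w i)
    (hw₁ : ∑ i, w i = 1) {z : E} (hz : ∑ i, w i • x i = z) {s : ℝ} (hs : 0 ≤ s) {i₀ : ι}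
    (hsw : s ≤ (1 + s) * w i₀) :
    z - s • (x i₀ - z) ∈ convexHull ℝ K := by
  set μ : ι → ℝ := fun i => (1 + s) * w i - if i = i₀ then s else 0
  have hμ₀ : ∀ i ∈ Finset.univ, 0 ≤ μ i := by
    intro i _
    by_cases h : i = i₀
    · subst h; simpa [μ] using hsw
    · simpa [μ, h] using mul_nonneg (by linarith) (hw₀ i)
  have hμ₁ : ∑ i, μ i = 1 := by
    simp [μ, Finset.sum_sub_distrib, ← Finset.mul_sum, hw₁]
  have hμz : ∑ i, μ i • x i = z - s • (x i₀ - z) := by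
    simp only [μ, sub_smul, mul_smul, Finset.sum_sub_distrib, ← Finset.smul_sum, hz, ite_smul,
      zero_smul, Finset.sum_ite_eq', Finset.mem_univ, if_true]
    module
  rw [← hμz]
  exact (convex_convexHull ℝ K).sum_mem hμ₀ hμ₁ fun i _ => subset_convexHull ℝ K (hxK i)

theorem exists_sub_inv_finrank_smul_sub_mem_convexHull [FiniteDimensional ℝ E] {K : Set E}
    {z : E} (hz : z ∈ convexHull ℝ K) :
    ∃ x ∈ K, z - (finrank ℝ E : ℝ)⁻¹ • (x - z) ∈ convexHull ℝ K := by
  classical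
  obtain ⟨ι, _, x, w, hxK, hx, hw₀, hw₁, hwz⟩ := eq_pos_convex_span_of_mem_convexHull hz
  set n : ℕ := finrank ℝ E
  have hcard : Fintype.card ι ≤ n + 1 :=
    hx.card_le_finrank_succ.trans (Nat.succ_le_succ (Submodule.finrank_le _))
  have hι : (Finset.univ : Finset ι).Nonempty := by
    by_contra h
    simp [Finset.not_nonempty_iff_eq_empty.mp h] at hw₁
  obtain ⟨i₀, -, hi₀⟩ : ∃ i ∈ Finset.univ, (n + 1 : ℝ)⁻¹ ≤ w i := by
    refine Finset.exists_le_of_sum_le hι ?_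
    rw [Finset.sum_const, Finset.card_univ, nsmul_eq_mul, hw₁, ← div_eq_mul_inv,
      div_le_one (by positivity)]
    exact_mod_cast hcard
  refine ⟨x i₀, hxK ⟨i₀, rfl⟩,
    sub_smul_sub_mem_convexHull_of_le_weight (fun i => hxK ⟨i, rfl⟩) (fun i => (hw₀ i).le) hw₁
      hwz (by positivity) ?_⟩
  rcases Nat.eq_zero_or_pos n with hn | hn
  · simp [hn, (hw₀ i₀).le]
  · calc (n : ℝ)⁻¹ = (1 + (n : ℝ)⁻¹) * (n + 1 : ℝ)⁻¹ := by field_simp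
      _ ≤ (1 + (n : ℝ)⁻¹) * w i₀ := by gcongr

end ConvexHull

theorem Convex.add_smul_sub_mem_interior_of_lt_one {E : Type*} [AddCommGroup E] [Module ℝ E]
    [TopologicalSpace E] [IsTopologicalAddGroup E] [ContinuousConstSMul ℝ E] {C : Set E}
    (hC : Convex ℝ C) {z y : E} (hz : z ∈ interior C) (hy : y ∈ C) {t : ℝ} (ht₀ : 0 ≤ t)
    (ht₁ : t < 1) : z + t • (y - z) ∈ interior C := by
  have h := hC.add_smul_sub_mem_interior hy hz (t := 1 - t) ⟨by linarith, by linarith⟩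
  convert h using 1
  module

section Dense

variable {E : Type*} [SeminormedAddCommGroup E] [NormedSpace ℝ E] {Λ U : Set E}

theorem Dense.exists_mem_segment_subset_dist_lt (hΛ : Dense Λ) (hU : IsOpen U)
    (hUc : Convex ℝ U) {z v : E} (hsub : z - v ∈ U) (hadd : z + v ∈ U) {ε : ℝ} (hε : 0 < ε) :
    ∃ w ∈ Λ, segment ℝ (z - w) (z + w) ⊆ U ∧ dist w v < ε := by
  have hopen : IsOpen ({w | z - w ∈ U} ∩ {w | z + w ∈ U} ∩ ball v ε) :=
    ((hU.preimage (by fun_prop)).inter (hU.preimage (by fun_prop))).inter isOpen_ball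
  obtain ⟨w, hwΛ, ⟨hwsub, hwadd⟩, hwv⟩ :=
    hΛ.exists_mem_open hopen ⟨v, ⟨hsub, hadd⟩, mem_ball_self hε⟩
  exact ⟨w, hwΛ, hUc.segment_subset hwsub hwadd, hwv⟩

theorem Dense.exists_mem_segment_subset_half_norm_le (hΛ : Dense Λ) (hU : IsOpen U)
    (hUc : Convex ℝ U) {z v : E} (hsub : z - v ∈ U) (hadd : z + v ∈ U) :
    ∃ w ∈ Λ, segment ℝ (z - w) (z + w) ⊆ U ∧ ‖v‖ / 2 ≤ ‖w‖ := by
  rcases eq_or_ne ‖v‖ 0 with hv | hv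
  · obtain ⟨w, hwΛ, hseg, -⟩ := hΛ.exists_mem_segment_subset_dist_lt hU hUc hsub hadd one_pos
    exact ⟨w, hwΛ, hseg, by simp [hv]⟩
  · obtain ⟨w, hwΛ, hseg, hwv⟩ := hΛ.exists_mem_segment_subset_dist_lt hU hUc hsub hadd
      (half_pos ((norm_nonneg v).lt_of_ne' hv))
    refine ⟨w, hwΛ, hseg, ?_⟩
    linarith [norm_sub_norm_le v w, dist_eq_norm w v, norm_sub_rev v w]

end Dense

theorem geometric_lemma_dense_general {n : ℕ}
    (K : Set (EuclideanSpace ℝ (Fin n)))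
    (Λ : Set (EuclideanSpace ℝ (Fin n))) (hΛ : Dense Λ)
    (z : EuclideanSpace ℝ (Fin n)) (hz : z ∈ interior (convexHull ℝ K)) :
    ∃ zbar ∈ Λ,
      segment ℝ (z - zbar) (z + zbar) ⊆ interior (convexHull ℝ K) ∧
      ‖zbar‖ ≥ (1 / (4 * (n : ℝ))) * Metric.infDist z K := by
  have hC : Convex ℝ (convexHull ℝ K) := convex_convexHull ℝ K
  obtain ⟨x, hxK, hq⟩ := exists_sub_inv_finrank_smul_sub_mem_convexHull (interior_subset hz)
  rw [finrank_euclideanSpace_fin] at hq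
  set v := (2 * n : ℝ)⁻¹ • (x - z)
  have hadd : z + v ∈ interior (convexHull ℝ K) := by
    refine hC.add_smul_sub_mem_interior_of_lt_one hz (subset_convexHull ℝ K hxK)
      (by positivity) ?_
    rcases n.eq_zero_or_pos with rfl | hn
    · simp
    · exact inv_lt_one_of_one_lt₀ (by norm_cast; omega)
  have hsub : z - v ∈ interior (convexHull ℝ K) := by
    convert hC.add_smul_sub_mem_interior_of_lt_one hz hq (t := 1 / 2) (by norm_num)
      (by norm_num) using 1
    module
  obtain ⟨w, hwΛ, hseg, hw⟩ :=
    hΛ.exists_mem_segment_subset_half_norm_le isOpen_interior hC.interior hsub hadd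
  refine ⟨w, hwΛ, hseg, le_trans ?_ hw⟩
  calc 1 / (4 * (n : ℝ)) * infDist z K ≤ 1 / (4 * n) * ‖x - z‖ := by
        gcongr
        simpa [dist_eq_norm, norm_sub_rev] using infDist_le_dist_of_mem (x := z) hxK
    _ = ‖v‖ / 2 := by
        have h2n : (0 : ℝ) ≤ 2 * n := by positivity
        simp only [v, norm_smul, Real.norm_eq_abs, abs_inv, abs_of_nonneg h2n]
        ring

/-- **Geometric lemma with directions in a dense set.** Let `K ⊆ ℝⁿ` be a nonempty
compact set and let `Λ ⊆ ℝⁿ` be dense. Then for every `z ∈ int conv K` there exists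
`z̄ ∈ Λ` such that the closed segment `[z − z̄, z + z̄]` is contained in `int conv K`
and `|z̄| ≥ (1/(4n))·dist(z, K)`. -/
theorem geometric_lemma_dense {n : ℕ}
    (K : Set (EuclideanSpace ℝ (Fin n))) (hK : IsCompact K) (hKne : K.Nonempty)
    (Λ : Set (EuclideanSpace ℝ (Fin n))) (hΛ : Dense Λ)
    (z : EuclideanSpace ℝ (Fin n)) (hz : z ∈ interior (convexHull ℝ K)) :
    ∃ zbar ∈ Λ,
      segment ℝ (z - zbar) (z + zbar) ⊆ interior (convexHull ℝ K) ∧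
      ‖zbar‖ ≥ (1 / (4 * (n : ℝ))) * Metric.infDist z K :=
  geometric_lemma_dense_general K Λ hΛ z hz
end

section
/- Let d ≥ 1 be an integer, let 𝒰 ⊂ ℝ × ℝ^d be an open set and let F : 𝒰 → ℝ be continuous, bounded and non-negative. For y ∈ 𝒰 define K_y := { (u, m, b) ∈ ℝ × ℝ^d × ℝ^d : m = u b, |b| = 1, u² = F(y) }. Then each K_y is a nonempty compact subset of ℝ^{2d+1}, and the map y ↦ K_y is continuous and bounded on 𝒰 with respect to the Hausdorff metric. More precisely, if |√F(y) − √F(y')| < ε then d_H(K_y, K_{y'}) < 2ε(1 + √(sup F)) — in particular, d_H(K_y, K_{y'}) is small whenever y' is close to y. -/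
open Metric

/-- The constraint set `K_y = {(u, m, b) : m = u b, |b| = 1, u² = F(y)}` for the
continuity equation, as a subset of `ℝ × ℝ^d × ℝ^d`. -/
def constraintSet {d : ℕ} (F : ℝ × EuclideanSpace ℝ (Fin d) → ℝ)
    (y : ℝ × EuclideanSpace ℝ (Fin d)) :
    Set (ℝ × EuclideanSpace ℝ (Fin d) × EuclideanSpace ℝ (Fin d)) :=
  {z | z.2.1 = z.1 • z.2.2 ∧ ‖z.2.2‖ = 1 ∧ z.1 ^ 2 = F y}

lemma cs_key {d : ℕ} (F : ℝ × EuclideanSpace ℝ (Fin d) → ℝ)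
    (y y' : ℝ × EuclideanSpace ℝ (Fin d)) (hy' : 0 ≤ F y') :
    ∀ z ∈ constraintSet F y, ∃ w ∈ constraintSet F y',
      dist z w ≤ |Real.sqrt (F y) - Real.sqrt (F y')| := by
  rintro ⟨u, m, b⟩ ⟨hm, hb, hu⟩
  set u' : ℝ := if 0 ≤ u then Real.sqrt (F y') else -Real.sqrt (F y') with hu'
  refine ⟨(u', u' • b, b), ⟨rfl, hb, ?_⟩, ?_⟩
  · rw [hu']; split <;> simp [Real.sq_sqrt hy']
  · have habs : |u| = Real.sqrt (F y) := by
      rw [← hu, Real.sqrt_sq_eq_abs]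
    have hdu : dist u u' ≤ |Real.sqrt (F y) - Real.sqrt (F y')| := by
      rw [Real.dist_eq, hu']
      rcases le_or_gt 0 u with h | h
      · rw [if_pos h, ← abs_of_nonneg h, habs]
      · rw [if_neg (not_le.mpr h)]
        have : u = -Real.sqrt (F y) := by
          rw [← habs, abs_of_neg h, neg_neg]
        rw [this]
        rw [show -Real.sqrt (F y) - -Real.sqrt (F y') = -(Real.sqrt (F y) - Real.sqrt (F y')) by ring, abs_neg]
    have : dist ((u:ℝ), m, b) (u', u' • b, b) = dist u u' := by
      rw [Prod.dist_eq, Prod.dist_eq, hm]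
      have : dist (u • b) (u' • b) = dist u u' := by
        rw [dist_eq_norm, ← sub_smul, norm_smul, hb, mul_one, dist_eq_norm]
      simp [this, dist_self, dist_nonneg]
    rw [this]; exact hdu

lemma cs_haus_le {d : ℕ} (F : ℝ × EuclideanSpace ℝ (Fin d) → ℝ)
    (y y' : ℝ × EuclideanSpace ℝ (Fin d)) (hy : 0 ≤ F y) (hy' : 0 ≤ F y') :
    hausdorffDist (constraintSet F y) (constraintSet F y')
      ≤ |Real.sqrt (F y) - Real.sqrt (F y')| := by
  refine hausdorffDist_le_of_mem_dist (abs_nonneg _) (cs_key F y y' hy') ?_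
  intro z hz
  obtain ⟨w, hw, hd⟩ := cs_key F y' y hy z hz
  exact ⟨w, hw, by rwa [abs_sub_comm]⟩

lemma cs_subset {d : ℕ} (F : ℝ × EuclideanSpace ℝ (Fin d) → ℝ)
    (y : ℝ × EuclideanSpace ℝ (Fin d)) :
    constraintSet F y ⊆ closedBall 0 (Real.sqrt (F y) + 1) := by
  rintro ⟨u, m, b⟩ ⟨hm, hb, hu⟩
  dsimp only at hm hb hu
  have habs : |u| = Real.sqrt (F y) := by rw [← hu, Real.sqrt_sq_eq_abs]
  have h1 : (0:ℝ) ≤ Real.sqrt (F y) := Real.sqrt_nonneg _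
  rw [mem_closedBall, Prod.dist_eq, Prod.dist_eq]
  simp only [Prod.fst_zero, Prod.snd_zero, dist_zero_right, Real.norm_eq_abs]
  have hmn : ‖m‖ = Real.sqrt (F y) := by
    rw [hm, norm_smul, hb, mul_one, Real.norm_eq_abs, habs]
  rw [habs, hmn, hb]
  refine max_le (by linarith) (max_le (by linarith) (by linarith))

/-- If `F` is continuous, bounded and non-negative on an open set `𝒰 ⊆ ℝ × ℝ^d` (`d ≥ 1`),
then each constraint set `K_y` is a nonempty compact subset of `ℝ × ℝ^d × ℝ^d`, the map
`y ↦ K_y` is continuous and bounded on `𝒰` in the Hausdorff metric, and more precisely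
`|√F(y) − √F(y')| < ε` implies `d_H(K_y, K_{y'}) < 2ε(1 + √(sup F))`. -/
theorem constraintSet_continuous_bounded (d : ℕ) (hd : 1 ≤ d)
    (𝒰 : Set (ℝ × EuclideanSpace ℝ (Fin d))) (h𝒰 : IsOpen 𝒰)
    (F : ℝ × EuclideanSpace ℝ (Fin d) → ℝ)
    (hFcont : ContinuousOn F 𝒰) (hFbdd : ∃ M : ℝ, ∀ y ∈ 𝒰, F y ≤ M)
    (hFnonneg : ∀ y ∈ 𝒰, 0 ≤ F y) :
    (∀ y ∈ 𝒰, (constraintSet F y).Nonempty ∧ IsCompact (constraintSet F y)) ∧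
    (∀ y ∈ 𝒰, ∀ ε > (0 : ℝ), ∃ δ > (0 : ℝ), ∀ y' ∈ 𝒰, dist y' y < δ →
      hausdorffDist (constraintSet F y) (constraintSet F y') < ε) ∧
    (∃ R : ℝ, ∀ y ∈ 𝒰, constraintSet F y ⊆ closedBall 0 R) ∧
    (∀ ε > (0 : ℝ), ∀ y ∈ 𝒰, ∀ y' ∈ 𝒰, |Real.sqrt (F y) - Real.sqrt (F y')| < ε →
      hausdorffDist (constraintSet F y) (constraintSet F y') <
        2 * ε * (1 + Real.sqrt (sSup (F '' 𝒰)))) := by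
  refine ⟨?_, ?_, ?_, ?_⟩
  · intro y hy
    constructor
    · refine ⟨(Real.sqrt (F y),
        Real.sqrt (F y) • EuclideanSpace.single (⟨0, hd⟩ : Fin d) (1:ℝ),
        EuclideanSpace.single (⟨0, hd⟩ : Fin d) (1:ℝ)), rfl, ?_, ?_⟩
      · rw [EuclideanSpace.norm_single, norm_one]
      · exact Real.sq_sqrt (hFnonneg y hy)
    · have hclosed : IsClosed (constraintSet F y) := by
        have h1 : IsClosed {z : ℝ × EuclideanSpace ℝ (Fin d) × EuclideanSpace ℝ (Fin d) |
            z.2.1 = z.1 • z.2.2} := isClosed_eq (by fun_prop) (by fun_prop)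
        have h2 : IsClosed {z : ℝ × EuclideanSpace ℝ (Fin d) × EuclideanSpace ℝ (Fin d) |
            ‖z.2.2‖ = 1} := isClosed_eq (by fun_prop) continuous_const
        have h3 : IsClosed {z : ℝ × EuclideanSpace ℝ (Fin d) × EuclideanSpace ℝ (Fin d) |
            z.1 ^ 2 = F y} := isClosed_eq (by fun_prop) continuous_const
        exact (h1.inter (h2.inter h3))
      exact Metric.isCompact_of_isClosed_isBounded hclosed
        ((isBounded_closedBall).subset (cs_subset F y))
  · intro y hy ε hε
    have hc : ContinuousAt (fun x => Real.sqrt (F x)) y :=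
      Real.continuous_sqrt.continuousAt.comp (hFcont.continuousAt (h𝒰.mem_nhds hy))
    obtain ⟨δ, hδ, hδ'⟩ := Metric.continuousAt_iff.mp hc ε hε
    refine ⟨δ, hδ, fun y' hy' hdist => ?_⟩
    have := hδ' hdist
    rw [Real.dist_eq] at this
    calc hausdorffDist (constraintSet F y) (constraintSet F y')
        ≤ |Real.sqrt (F y) - Real.sqrt (F y')| :=
          cs_haus_le F y y' (hFnonneg y hy) (hFnonneg y' hy')
      _ = |Real.sqrt (F y') - Real.sqrt (F y)| := abs_sub_comm _ _
      _ < ε := this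
  · obtain ⟨M, hM⟩ := hFbdd
    refine ⟨Real.sqrt (max M 0) + 1, fun y hy => ?_⟩
    refine (cs_subset F y).trans (closedBall_subset_closedBall ?_)
    have : F y ≤ max M 0 := le_trans (hM y hy) (le_max_left _ _)
    have := Real.sqrt_le_sqrt this
    linarith
  · intro ε hε y hy y' hy' h
    have h1 := cs_haus_le F y y' (hFnonneg y hy) (hFnonneg y' hy')
    have hs : (0:ℝ) ≤ Real.sqrt (sSup (F '' 𝒰)) := Real.sqrt_nonneg _
    nlinarith [h1, h, hε, hs]
end
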